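/- Critical set of the four-dimensional galactic potential: Fix ω > 0 and ε > 0 and define U : ℝ⁴ → ℝ by U(x) = (ω²/2)(x₁² + x₂² + x₃² + x₄²) + (ε/2)( −(1/2)(x₁² + x₂²)² + (1/2)(x₁² + x₂²)²(x₃² + x₄²)⁴ ). Then ∇U(x) = 0 if and only if x = (0,0,0,0), or x₁² + x₂² = ω²/ε and x₃ = x₄ = 0. That is, the critical set of U is {0} ∪ { (x₁,x₂,0,0) : x₁² + x₂² = ω²/ε }. -/

import Mathlib

/-!
The potential depends on `x` only through `r = x₁² + x₂²` and `s = x₃² + x₄²`, say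
`U = F(r, s)`, so `∇U(x) = 2 ∂ᵣF · (x₁, x₂, 0, 0) + 2 ∂ₛF · (0, 0, x₃, x₄)`.
Here `2 ∂ₛF = ω² + 2ε r² s³ > 0`, which forces `x₃ = x₄ = 0`; then `s = 0` and
`2 ∂ᵣF = ω² - ε r`, so the remaining equations hold iff `x₁ = x₂ = 0` or `r = ω²/ε`.
-/

lemma hasFDerivAt_sq_add_sq {ι : Type*} [Fintype ι] (x : EuclideanSpace ℝ ι) (i j : ι) :
    HasFDerivAt (fun y : EuclideanSpace ℝ ι => y i ^ 2 + y j ^ 2)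
      ((2 * x i) • EuclideanSpace.proj (𝕜 := ℝ) i + (2 * x j) • EuclideanSpace.proj j) x := by
  refine (((PiLp.hasFDerivAt_apply (𝕜 := ℝ) 2 x i).pow 2).add
    ((PiLp.hasFDerivAt_apply (𝕜 := ℝ) 2 x j).pow 2)).congr_fderiv ?_
  ext v
  simp

lemma EuclideanSpace.eq_zero_iff_fin_four (x : EuclideanSpace ℝ (Fin 4)) :
    x = 0 ↔ x 0 = 0 ∧ x 1 = 0 ∧ x 2 = 0 ∧ x 3 = 0 := by
  simp [← WithLp.ofLp_eq_zero, funext_iff, Fin.forall_fin_succ]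

lemma mul_eq_zero_and_mul_eq_zero_iff {M₀ : Type*} [MulZeroClass M₀] [NoZeroDivisors M₀]
    {a b c : M₀} :
    a * c = 0 ∧ b * c = 0 ↔ (a = 0 ∧ b = 0) ∨ c = 0 := by
  by_cases hc : c = 0 <;> simp [hc]

noncomputable def galacticPotential (ω ε r s : ℝ) : ℝ :=
  ω ^ 2 / 2 * (r + s) + ε / 4 * (r ^ 2 * s ^ 4 - r ^ 2)

noncomputable def galacticGradient (ω ε : ℝ) (x : EuclideanSpace ℝ (Fin 4)) :
    EuclideanSpace ℝ (Fin 4) :=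
  let r := x 0 ^ 2 + x 1 ^ 2
  let s := x 2 ^ 2 + x 3 ^ 2
  !₂[x 0 * (ω ^ 2 + ε * r * (s ^ 4 - 1)), x 1 * (ω ^ 2 + ε * r * (s ^ 4 - 1)),
    x 2 * (ω ^ 2 + 2 * ε * r ^ 2 * s ^ 3), x 3 * (ω ^ 2 + 2 * ε * r ^ 2 * s ^ 3)]

lemma hasGradientAt_galacticPotential (ω ε : ℝ) (x : EuclideanSpace ℝ (Fin 4)) :
    HasGradientAt (fun y : EuclideanSpace ℝ (Fin 4) =>
        galacticPotential ω ε (y 0 ^ 2 + y 1 ^ 2) (y 2 ^ 2 + y 3 ^ 2))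
      (galacticGradient ω ε x) x := by
  have hr := hasFDerivAt_sq_add_sq x 0 1
  have hs := hasFDerivAt_sq_add_sq x 2 3
  rw [hasGradientAt_iff_hasFDerivAt]
  refine (((hr.add hs).const_mul (ω ^ 2 / 2)).add
    ((((hr.pow 2).mul (hs.pow 4)).sub (hr.pow 2)).const_mul (ε / 4))).congr_fderiv ?_
  ext v
  simp [galacticGradient, PiLp.inner_apply, Fin.sum_univ_four]
  ring

lemma galacticGradient_eq_zero_iff {ω ε : ℝ} (hω : ω ≠ 0) (hε : 0 < ε)
    (x : EuclideanSpace ℝ (Fin 4)) :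
    galacticGradient ω ε x = 0 ↔
      x = 0 ∨ (x 0 ^ 2 + x 1 ^ 2 = ω ^ 2 / ε ∧ x 2 = 0 ∧ x 3 = 0) := by
  rw [EuclideanSpace.eq_zero_iff_fin_four, EuclideanSpace.eq_zero_iff_fin_four x]
  simp only [galacticGradient, Matrix.cons_val]
  set r := x 0 ^ 2 + x 1 ^ 2
  set s := x 2 ^ 2 + x 3 ^ 2 with hs
  have hB : ω ^ 2 + 2 * ε * r ^ 2 * s ^ 3 ≠ 0 := by positivity
  simp only [mul_eq_zero_iff_right hB]
  by_cases hx : x 2 = 0 ∧ x 3 = 0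
  · have hA : ω ^ 2 + ε * r * (s ^ 4 - 1) = 0 ↔ r = ω ^ 2 / ε := by
      rw [hs, hx.1, hx.2, eq_div_iff hε.ne']
      constructor <;> intro h <;> linarith
    simp only [hx, and_true, mul_eq_zero_and_mul_eq_zero_iff, hA]
  · tauto

/-- **Critical set of the four-dimensional galactic potential.**
Fix `ω > 0` and `ε > 0` and let
`U(x) = (ω²/2)‖x‖² + (ε/2)(−(1/2)(x₁²+x₂²)² + (1/2)(x₁²+x₂²)²(x₃²+x₄²)⁴)` on `ℝ⁴`.
Then `∇U(x) = 0` iff `x = 0`, or `x₁² + x₂² = ω²/ε` and `x₃ = x₄ = 0`. -/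
theorem critical_set_four_dim_galactic_potential
    (ω ε : ℝ) (hω : 0 < ω) (hε : 0 < ε)
    (U : EuclideanSpace ℝ (Fin 4) → ℝ)
    (hU : ∀ x : EuclideanSpace ℝ (Fin 4),
      U x = ω ^ 2 / 2 * (x 0 ^ 2 + x 1 ^ 2 + x 2 ^ 2 + x 3 ^ 2) +
        ε / 2 * (-(1 / 2 : ℝ) * (x 0 ^ 2 + x 1 ^ 2) ^ 2 +
          (1 / 2 : ℝ) * (x 0 ^ 2 + x 1 ^ 2) ^ 2 * (x 2 ^ 2 + x 3 ^ 2) ^ 4)) :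
    ∀ x : EuclideanSpace ℝ (Fin 4),
      gradient U x = 0 ↔
        x = 0 ∨ (x 0 ^ 2 + x 1 ^ 2 = ω ^ 2 / ε ∧ x 2 = 0 ∧ x 3 = 0) := by
  intro x
  have hU_eq : U = fun y => galacticPotential ω ε (y 0 ^ 2 + y 1 ^ 2) (y 2 ^ 2 + y 3 ^ 2) := by
    funext y
    rw [hU, galacticPotential]
    ring
  rw [hU_eq, (hasGradientAt_galacticPotential ω ε x).gradient]
  exact galacticGradient_eq_zero_iff hω.ne' hε x
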